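/- A fold string S is symmetric if and only if its folding morphism θ_S is palindromic, i.e., τ(θ_S(v)) = θ_S(τ(v)) for every word v over A (equivalently, θ_S(a) is a palindrome). -/

import Mathlib

open scoped Classical

/-- Letters of the folding alphabet {D, U}. -/
inductive FoldLetter : Type
  | D : FoldLetter
  | U : FoldLetter
deriving DecidableEq

/-- Words over {D, U}. -/
abbrev FWord := List FoldLetter

/-- The letter morphism μ swapping D and U. -/
def mir : FoldLetter → FoldLetter
  | .D => .U
  | .U => .D

/-- S̄ = μ(τ(S)): reverse the word and swap D and U. -/
def fbar (S : FWord) : FWord := (S.reverse).map mir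

/-- The folding convolution S * T. -/
def conv (S : FWord) : FWord → FWord
  | [] => S
  | b :: T => S ++ b :: conv (fbar S) T

/-- A fold string: a nonempty word over {D,U} starting with D. -/
def IsFoldString (S : FWord) : Prop := S ≠ [] ∧ S.head? = some FoldLetter.D

/-- The alphabet A = {a,b,c,d}, encoded as ZMod 4 (a = 0, b = 1, c = 2, d = 3),
so that σ is addition of 1 and f is k ↦ i^k. -/
abbrev Alpha := ZMod 4

/-- Words over A. -/
abbrev AWord := List Alpha

/-- w(D) = 1, w(U) = -1. -/
def wInt : FoldLetter → ℤ
  | .D => 1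
  | .U => -1

/-- The homomorphism w on words. -/
def wSum (S : FWord) : ℤ := (S.map wInt).sum

/-- θ_S(a) = e₀ e₁ ⋯ e_{m-1} with e₀ = a and e_i = σ^{w(a₁⋯a_i)}(a). -/
def thetaA (S : FWord) : AWord :=
  (List.range (S.length + 1)).map (fun i => ((wSum (S.take i) : ℤ) : Alpha))

/-- The word operation στ (reverse, then cyclically shift each letter). -/
def st (v : AWord) : AWord := v.reverse.map (· + 1)

/-- θ_S on a letter: θ_S(σ^k(a)) = (στ)^k (θ_S(a)). -/
def thetaL (S : FWord) (e : Alpha) : AWord := st^[e.val] (thetaA S)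

/-- The folding morphism θ_S as a monoid endomorphism of A*. -/
def theta (S : FWord) (v : AWord) : AWord := v.flatMap (thetaL S)

/-- f on letters: f(a) = 1, f(b) = i, f(c) = -1, f(d) = -i. -/
noncomputable def fL : Alpha → ℂ := fun e => Complex.I ^ e.val

/-- The homomorphism f : A* → (ℂ, +). -/
noncomputable def fW (v : AWord) : ℂ := (v.map fL).sum

/-- The k-th point z_k of the curve of a word v. -/
noncomputable def pt (v : AWord) (k : ℕ) : ℂ := fW (v.take k)

/-- The curve of v traverses a segment twice. -/
def TraversesTwice (v : AWord) : Prop :=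
  ∃ k l, k < v.length ∧ l < v.length ∧ k ≠ l ∧
    ({pt v k, pt v (k + 1)} : Set ℂ) = ({pt v l, pt v (l + 1)} : Set ℂ)

/-- The fold string S is self-avoiding. -/
def SelfAvoiding (S : FWord) : Prop :=
  ∀ n : ℕ, 1 ≤ n → ¬ TraversesTwice ((theta S)^[n] [0])

/-- z ∈ ℂ is a Gaussian integer. -/
def IsGaussianInt (z : ℂ) : Prop := ∃ p q : ℤ, z = (p : ℂ) + (q : ℂ) * Complex.I

/-- The number of indices k ∈ {0, …, |v|} with z_k = z (occurrences of z among
the points of the curve of v). -/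
noncomputable def countAt (v : AWord) (z : ℂ) : ℕ :=
  ((Finset.range (v.length + 1)).filter (fun k => pt v k = z)).card

/-- The fold string S is planefilling. -/
def Planefilling (S : FWord) : Prop :=
  ∀ R : ℝ, 0 < R → ∃ n : ℕ, 1 ≤ n ∧ ∃ q : ℂ, IsGaussianInt q ∧
    ∀ z : ℂ, IsGaussianInt z → ‖z - q‖ ≤ R →
      2 ≤ countAt ((theta S)^[n] [0]) z

/-- The word θ_S(abcd), whose curve is the θ-loop of S. -/
def loopWord (S : FWord) : AWord := theta S [0, 1, 2, 3]

/-- The rounding of the closed curve of a word v (all of whose steps are unit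
segments and with f(v) = 0), as a subset of ℂ. -/
noncomputable def roundedCurve (v : AWord) : Set ℂ :=
  ⋃ k ∈ Finset.range v.length,
    (segment ℝ (pt v k + (pt v (k + 1) - pt v k) / 4)
        (pt v (k + 1) - (pt v (k + 1) - pt v k) / 4) ∪
      segment ℝ (pt v (k + 1) - (pt v (k + 1) - pt v k) / 4)
        (pt v ((k + 1) % v.length) +
          (pt v ((k + 1) % v.length + 1) - pt v ((k + 1) % v.length)) / 4))

/-- The number of indices k ∈ {0, …, |v| - 1} with z_k = z (occurrences of z among
the vertices of the closed curve of v). -/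
noncomputable def vertexCount (v : AWord) (z : ℂ) : ℕ :=
  ((Finset.range v.length).filter (fun k => pt v k = z)).card

/-- The closed curve of v is maximally simple: it is simple, and every Gaussian
integer lying in a bounded connected component of the complement of its rounding
occurs exactly twice among its vertices. -/
def MaximallySimple (v : AWord) : Prop :=
  ¬ TraversesTwice v ∧
    ∀ z : ℂ, IsGaussianInt z → z ∉ roundedCurve v →
      Bornology.IsBounded (connectedComponentIn (roundedCurve v)ᶜ z) →
      vertexCount v z = 2

/-- A D-word: letters from {a,c} (even) and {b,d} (odd) alternate. -/
def IsDWord (v : AWord) : Prop :=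
  ∀ k (h : k + 1 < v.length),
    (v[k]'(Nat.lt_of_succ_lt h)).val % 2 ≠ (v[k + 1]'h).val % 2

/-- A loop word: a nonempty D-word with f(v) = 0. -/
def IsLoopWord (v : AWord) : Prop := v ≠ [] ∧ IsDWord v ∧ fW v = 0

/-- The eight square words σᵏ(abcd), σᵏ(adcb), k = 0,1,2,3. -/
def squareWords : List AWord :=
  [[0, 1, 2, 3], [1, 2, 3, 0], [2, 3, 0, 1], [3, 0, 1, 2],
   [0, 3, 2, 1], [1, 0, 3, 2], [2, 1, 0, 3], [3, 2, 1, 0]]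

/-- K[v] ⊆ ℂ: the union of the segments of the curve of v. -/
noncomputable def KSet (v : AWord) : Set ℂ :=
  ⋃ k ∈ Finset.range v.length, segment ℝ (pt v k) (pt v (k + 1))

/-- The number of boundary points of S: Gaussian integers visited exactly once
by the curve of θ_S(a). -/
noncomputable def rCount (S : FWord) : ℕ :=
  ((Finset.range ((thetaA S).length + 1)).filter
    (fun k => countAt (thetaA S) (pt (thetaA S) k) = 1)).card

/-- The k-th point Z_k of the infinite curve of S. -/
noncomputable def Zpt (S : FWord) (k : ℕ) : ℂ := pt ((theta S)^[k] [0]) k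

/-- The fold string S is perfect. -/
def IsPerfectFold (S : FWord) : Prop :=
  SelfAvoiding S ∧
    ∀ p q : ℂ, IsGaussianInt p → IsGaussianInt q → ‖p - q‖ = 1 →
      ∃! jk : Fin 4 × ℕ,
        ({Complex.I ^ (jk.1 : ℕ) * Zpt S jk.2,
          Complex.I ^ (jk.1 : ℕ) * Zpt S (jk.2 + 1)} : Set ℂ) = ({p, q} : Set ℂ)


/-!
θ_S(a) lists, mod 4, the values of w on the prefixes of S. Read backwards, it lists the values
on the prefixes of S̄ shifted by w(S). All these lists start with 0, and consecutive letters
differ by w(D) = 1 or w(U) = -1, which stay distinct mod 4; so θ_S(a) is a palindrome exactly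
when S = S̄. A morphism commutes with reversal iff it maps letters to palindromes, and
θ_S(σᵏ(a)) = (στ)ᵏ(θ_S(a)) is a palindrome with θ_S(a) because στ preserves palindromes.
-/

lemma wInt_mir (x : FoldLetter) : wInt (mir x) = -wInt x := by
  cases x <;> rfl

lemma wInt_cast_injective : Function.Injective (fun x : FoldLetter => (wInt x : Alpha)) := by
  intro x y
  cases x <;> cases y <;> decide

lemma wSum_cons (x : FoldLetter) (S : FWord) : wSum (x :: S) = wInt x + wSum S := by
  simp [wSum]

lemma wSum_map_mir (S : FWord) : wSum (S.map mir) = -wSum S := by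
  induction S with
  | nil => rfl
  | cons x S ih => simp only [List.map_cons, wSum_cons, wInt_mir, ih]; ring

lemma wSum_reverse (S : FWord) : wSum S.reverse = wSum S := by
  simp [wSum, List.sum_reverse]

lemma wSum_fbar (S : FWord) : wSum (fbar S) = -wSum S := by
  rw [fbar, wSum_map_mir, wSum_reverse]

lemma wSum_take_fbar (S : FWord) (i : ℕ) :
    wSum ((fbar S).take i) = wSum (S.take (S.length - i)) - wSum S := by
  have hsplit : wSum S = wSum (S.take (S.length - i)) + wSum (S.drop (S.length - i)) := by
    conv_lhs => rw [← List.take_append_drop (S.length - i) S]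
    simp [wSum]
  rw [fbar, ← List.map_take, List.take_reverse, wSum_map_mir, wSum_reverse, hsplit]
  ring

lemma length_thetaA (S : FWord) : (thetaA S).length = S.length + 1 := by
  simp [thetaA]

lemma thetaA_nil : thetaA [] = [0] := by
  simp [thetaA, wSum]

lemma thetaA_cons (x : FoldLetter) (S : FWord) :
    thetaA (x :: S) = 0 :: (thetaA S).map (· + (wInt x : Alpha)) := by
  rw [thetaA, List.length_cons, List.range_succ_eq_map, List.map_cons, List.map_map, thetaA,
    List.map_map]
  congr 1
  apply List.map_congr_left
  intro i _
  simp [wSum_cons, add_comm]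

lemma head?_thetaA (S : FWord) : (thetaA S).head? = some 0 := by
  cases S with
  | nil => rw [thetaA_nil]; rfl
  | cons x S => rw [thetaA_cons]; rfl

lemma thetaA_injective : Function.Injective thetaA := by
  intro S
  induction S with
  | nil =>
    intro T h
    cases T with
    | nil => rfl
    | cons y T => simpa [length_thetaA] using congrArg List.length h
  | cons x S ih =>
    intro T h
    cases T with
    | nil => simpa [length_thetaA] using congrArg List.length h
    | cons y T =>
      rw [thetaA_cons, thetaA_cons, List.cons.injEq] at h
      have hxy : x = y := wInt_cast_injective <| by
        simpa [head?_thetaA] using congrArg List.head? h.2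
      subst hxy
      rw [ih ((List.map_injective_iff.mpr (add_left_injective _)) h.2)]

lemma reverse_thetaA (S : FWord) :
    (thetaA S).reverse = (thetaA (fbar S)).map (· + (wSum S : Alpha)) := by
  apply List.ext_getElem (by simp [length_thetaA, fbar])
  intro i h₁ h₂
  simp [thetaA, wSum_take_fbar, List.getElem_reverse]

lemma eq_fbar_iff_reverse_thetaA_eq (S : FWord) : S = fbar S ↔ (thetaA S).reverse = thetaA S := by
  rw [reverse_thetaA]
  constructor
  · intro h
    have hw : wSum S = 0 := by
      have := wSum_fbar S
      rw [← h] at this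
      omega
    rw [← h, hw]
    simp
  · intro h
    have hw : (wSum S : Alpha) = 0 := by
      simpa [head?_thetaA] using congrArg List.head? h
    rw [hw] at h
    simp only [add_zero, List.map_id_fun', id_eq] at h
    exact (thetaA_injective h).symm

lemma reverse_flatMap_eq_iff {α β : Type*} (g : α → List β) :
    (∀ v : List α, (v.flatMap g).reverse = v.reverse.flatMap g) ↔ ∀ a, (g a).reverse = g a := by
  constructor
  · intro h a
    simpa using h [a]
  · intro h v
    rw [List.reverse_flatMap]
    exact List.flatMap_congr fun a _ => h a

lemma reverse_st_eq {v : AWord} (h : v.reverse = v) : (st v).reverse = st v := by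
  rw [st, h, ← List.map_reverse, h]

lemma reverse_thetaL_eq {S : FWord} (h : (thetaA S).reverse = thetaA S) (e : Alpha) :
    (thetaL S e).reverse = thetaL S e := by
  rw [thetaL]
  induction e.val with
  | zero => exact h
  | succ k ih => rw [Function.iterate_succ_apply']; exact reverse_st_eq ih

lemma reverse_theta_eq_iff (S : FWord) :
    (∀ v : AWord, (theta S v).reverse = theta S v.reverse) ↔ (thetaA S).reverse = thetaA S :=
  (reverse_flatMap_eq_iff (thetaL S)).trans
    ⟨fun h => h 0, fun h => reverse_thetaL_eq h⟩

theorem symmetric_iff_palindromic_general (S : FWord) :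
    S = fbar S ↔ ∀ v : AWord, (theta S v).reverse = theta S v.reverse := by
  rw [reverse_theta_eq_iff, eq_fbar_iff_reverse_thetaA_eq]

/-- S is symmetric iff θ_S is palindromic. -/
theorem symmetric_iff_palindromic (S : FWord) (hS : IsFoldString S) :
    S = fbar S ↔ ∀ v : AWord, (theta S v).reverse = theta S v.reverse :=
  symmetric_iff_palindromic_general S
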